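/- Let V ∈ ℝ^{k×r}, Σ ∈ ℝ^{r×r}, and g ~ N(0, I_r). Define the random vector v ∈ ℝ^k with entries V_ℓ = exp(e_ℓ^T V Σ g) / Σ_{j∈[k]} exp(e_j^T V Σ g) (the softmax of VΣg), and set π = E[v] ∈ ℝ^k and Π = E[v v^T] ∈ ℝ^{k×k}. Then E[v g^T] = (diag(π) − Π) · V Σ. -/

import Mathlib

/-!
Gaussian integration by parts: the standard normal density satisfies `φ' = -t φ`, so
`E[f(g) g] = E[f'(g)]` for `g ~ N(0, 1)` and bounded `f, f'`. Applied by Fubini on the lines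
parallel to the `i`-th axis, this gives `E[F(g) gᵢ] = E[∂ᵢF(g)]` for `g ~ N(0, I_r)`.
For `F = s_ℓ ∘ VΣ`, with `s` the softmax, the chain rule gives `∂ᵢF(x) = (J(VΣx) VΣ)_{ℓi}`,
where `J = diag s - s sᵀ` is the Jacobian of the softmax, and `E[J(VΣg)] = diag π - Π`.
-/

open MeasureTheory ProbabilityTheory

/-- The softmax function on `ℝ^k`. -/
noncomputable def softmax (k : ℕ) (x : Fin k → ℝ) (ℓ : Fin k) : ℝ :=
  Real.exp (x ℓ) / ∑ j, Real.exp (x j)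

section GaussianIntegrationByParts

lemma gaussianPDFReal_zero_one :
    gaussianPDFReal 0 1 = fun t => (√(2 * Real.pi))⁻¹ * Real.exp (-t ^ 2 / 2) := by
  ext t; simp [gaussianPDFReal_def]

lemma hasDerivAt_gaussianPDFReal_zero_one (t : ℝ) :
    HasDerivAt (gaussianPDFReal 0 1) (-t * gaussianPDFReal 0 1 t) t := by
  rw [gaussianPDFReal_zero_one]
  refine (((hasDerivAt_pow 2 t).fun_neg.div_const 2).exp.const_mul _).congr_deriv ?_
  push_cast
  ring

lemma integrable_mul_gaussianPDFReal_zero_one :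
    Integrable fun t : ℝ => t * gaussianPDFReal 0 1 t := by
  simpa [gaussianPDFReal_zero_one, mul_left_comm, neg_div, div_eq_inv_mul] using
    (integrable_mul_exp_neg_mul_sq (b := 1 / 2) (by norm_num)).const_mul (√(2 * Real.pi))⁻¹

theorem integral_mul_id_gaussianReal_eq_integral_deriv {f f' : ℝ → ℝ} {C C' : ℝ}
    (hf : ∀ t, HasDerivAt f (f' t) t) (hfC : ∀ t, |f t| ≤ C) (hf'C : ∀ t, |f' t| ≤ C') :
    ∫ t, f t * t ∂gaussianReal 0 1 = ∫ t, f' t ∂gaussianReal 0 1 := by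
  set φ := gaussianPDFReal 0 1
  have hf_meas : Measurable f :=
    (continuous_iff_continuousAt.2 fun t => (hf t).continuousAt).measurable
  have hf'_meas : Measurable f' := by
    rw [show f' = deriv f from funext fun t => (hf t).deriv.symm]
    exact measurable_deriv f
  have hφ : Integrable φ := integrable_gaussianPDFReal 0 1
  have hφ' : Integrable fun t => -t * φ t := by
    simpa only [neg_mul] using integrable_mul_gaussianPDFReal_zero_one.fun_neg
  have ibp := integral_mul_deriv_eq_deriv_mul_of_integrable (u := f) (v := φ)
    (fun t _ => hf t) (fun t _ => hasDerivAt_gaussianPDFReal_zero_one t)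
    (hφ'.bdd_mul hf_meas.aestronglyMeasurable (.of_forall hfC))
    (hφ.bdd_mul hf'_meas.aestronglyMeasurable (.of_forall hf'C))
    (hφ.bdd_mul hf_meas.aestronglyMeasurable (.of_forall hfC))
  simp only [integral_gaussianReal_eq_integral_smul one_ne_zero, smul_eq_mul]
  calc ∫ t, φ t * (f t * t) = -∫ t, f t * (-t * φ t) := by
        rw [← integral_neg]; congr 1; ext t; ring
    _ = ∫ t, φ t * f' t := by
        rw [ibp, neg_neg]; congr 1; ext t; ring

theorem integral_pi_eq_integral_integral_insertNth {n : ℕ} {α : Type*} [MeasurableSpace α]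
    (μ : Fin (n + 1) → Measure α) [∀ j, SigmaFinite (μ j)] (i : Fin (n + 1))
    {E : Type*} [NormedAddCommGroup E] [NormedSpace ℝ E] {G : (Fin (n + 1) → α) → E}
    (hG : Integrable G (Measure.pi μ)) :
    ∫ x, G x ∂Measure.pi μ =
      ∫ y, ∫ t, G (i.insertNth t y) ∂μ i ∂Measure.pi fun j => μ (i.succAbove j) := by
  have he := (measurePreserving_piFinSuccAbove μ i).symm
  rw [← he.integral_comp' G]
  exact integral_prod_symm _ ((he.integrable_comp_emb (MeasurableEquiv.measurableEmbedding _)).2 hG)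

theorem integral_mul_eval_pi_gaussianReal_eq_integral_fderiv {r : ℕ} {F : (Fin r → ℝ) → ℝ}
    {C C' : ℝ} (i : Fin r) (hF : Differentiable ℝ F) (hFC : ∀ x, |F x| ≤ C)
    (hF'C : ∀ x, |fderiv ℝ F x (Pi.single i 1)| ≤ C') :
    ∫ x, F x * x i ∂Measure.pi (fun _ => gaussianReal 0 1) =
      ∫ x, fderiv ℝ F x (Pi.single i 1) ∂Measure.pi (fun _ => gaussianReal 0 1) := by
  obtain ⟨n, rfl⟩ : ∃ n, r = n + 1 := Nat.exists_eq_succ_of_ne_zero i.pos.ne'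
  have hF_meas : Measurable F := hF.continuous.measurable
  have hF'_meas := measurable_fderiv_apply_const ℝ F (Pi.single i (1 : ℝ))
  have hcoord :
      Integrable (fun x : Fin (n + 1) → ℝ => x i) (Measure.pi fun _ => gaussianReal 0 1) :=
    (measurePreserving_eval (fun _ => gaussianReal 0 1) i).integrable_comp_of_integrable
      (g := id) ((memLp_id_gaussianReal 1).integrable le_rfl)
  have hline : ∀ y t, HasDerivAt (fun s => F (i.insertNth s y))
      (fderiv ℝ F (i.insertNth t y) (Pi.single i 1)) t := fun y t => by
    simpa [Function.comp_def] using
      (hF _).hasFDerivAt.comp_hasDerivAt t (hasDerivAt_update (i.insertNth 0 y) i t)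
  rw [integral_pi_eq_integral_integral_insertNth _ i
      (hcoord.bdd_mul hF_meas.aestronglyMeasurable (.of_forall hFC)),
    integral_pi_eq_integral_integral_insertNth _ i
      (Integrable.of_bound hF'_meas.aestronglyMeasurable C' (.of_forall hF'C))]
  congr 1 with y
  simp only [Fin.insertNth_apply_same]
  exact integral_mul_id_gaussianReal_eq_integral_deriv (hline y) (fun _ => hFC _) (fun _ => hF'C _)

end GaussianIntegrationByParts

section Softmax

open Matrix

variable {k : ℕ}

lemma sum_exp_pos (x : Fin k → ℝ) (ℓ : Fin k) : 0 < ∑ j, Real.exp (x j) :=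
  Finset.sum_pos (fun _ _ => Real.exp_pos _) ⟨ℓ, Finset.mem_univ ℓ⟩

lemma softmax_nonneg (x : Fin k → ℝ) (ℓ : Fin k) : 0 ≤ softmax k x ℓ :=
  div_nonneg (Real.exp_pos _).le (sum_exp_pos x ℓ).le

lemma softmax_le_one (x : Fin k → ℝ) (ℓ : Fin k) : softmax k x ℓ ≤ 1 :=
  div_le_one_of_le₀ (Finset.single_le_sum (fun j _ => (Real.exp_pos (x j)).le)
    (Finset.mem_univ ℓ)) (sum_exp_pos x ℓ).le

lemma abs_softmax_le_one (x : Fin k → ℝ) (ℓ : Fin k) : |softmax k x ℓ| ≤ 1 :=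
  abs_le.2 ⟨by linarith [softmax_nonneg x ℓ], softmax_le_one x ℓ⟩

lemma continuous_softmax (ℓ : Fin k) : Continuous fun x => softmax k x ℓ :=
  Continuous.div (by fun_prop) (by fun_prop) fun x => (sum_exp_pos x ℓ).ne'

noncomputable def softmaxJacobian (k : ℕ) (x : Fin k → ℝ) : Matrix (Fin k) (Fin k) ℝ :=
  diagonal (softmax k x) - vecMulVec (softmax k x) (softmax k x)

lemma abs_softmaxJacobian_le_one (x : Fin k → ℝ) (ℓ j : Fin k) :
    |softmaxJacobian k x ℓ j| ≤ 1 := by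
  have hs := softmax_nonneg x
  have hs1 := softmax_le_one x
  refine abs_sub_le_of_nonneg_of_le ?_ ?_ (mul_nonneg (hs ℓ) (hs j))
    (mul_le_one₀ (hs1 ℓ) (hs j) (hs1 j))
  all_goals (rw [diagonal_apply]; split_ifs <;> simp [hs, hs1])

lemma hasFDerivAt_softmax (x : Fin k → ℝ) (ℓ : Fin k) :
    HasFDerivAt (fun y => softmax k y ℓ)
      (∑ j, softmaxJacobian k x ℓ j •
        ContinuousLinearMap.proj (R := ℝ) (φ := fun _ : Fin k => ℝ) j) x := by
  have hD := sum_exp_pos x ℓ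
  have hexp : ∀ j, HasFDerivAt (fun y : Fin k → ℝ => Real.exp (y j))
      (Real.exp (x j) • ContinuousLinearMap.proj j) x :=
    fun j => (hasFDerivAt_apply j x).exp
  have h := (hexp ℓ).mul
    ((hasFDerivAt_inv hD.ne').comp x (HasFDerivAt.fun_sum fun j _ => hexp j))
  have hfun : (fun y => softmax k y ℓ) =
      (fun y => Real.exp (y ℓ)) * (fun d => d⁻¹) ∘ fun y => ∑ i, Real.exp (y i) := by
    ext y; simp [softmax, div_eq_mul_inv]
  rw [hfun]
  refine h.congr_fderiv ?_
  ext y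
  simp only [Function.comp_apply, _root_.add_apply, _root_.smul_apply,
    ContinuousLinearMap.comp_apply, _root_.sum_apply, ContinuousLinearMap.proj_apply, smul_eq_mul,
    map_sum,
    ContinuousLinearMap.toSpanSingleton_apply, mul_neg, Finset.sum_neg_distrib, Finset.mul_sum,
    softmaxJacobian, Matrix.sub_apply, diagonal_apply, softmax, div_eq_mul_inv, vecMulVec_apply,
    sub_mul, ite_mul, zero_mul, Finset.sum_sub_distrib, Finset.sum_ite_eq, Finset.mem_univ,
    if_true]
  rw [neg_add_eq_sub]
  congr 1
  · ring
  · exact Finset.sum_congr rfl fun i _ => by ring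

lemma continuous_softmaxJacobian_apply (ℓ j : Fin k) :
    Continuous fun x => softmaxJacobian k x ℓ j := by
  simp only [softmaxJacobian, Matrix.sub_apply, diagonal_apply, vecMulVec_apply]
  split_ifs
  · subst_vars
    exact (continuous_softmax _).sub ((continuous_softmax _).mul (continuous_softmax _))
  · exact continuous_const.sub ((continuous_softmax _).mul (continuous_softmax _))

lemma integrable_softmaxJacobian_apply {Ω : Type*} [MeasurableSpace Ω] (μ : Measure Ω)
    [IsFiniteMeasure μ] {u : Ω → Fin k → ℝ} (hu : Measurable u) (ℓ j : Fin k) :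
    Integrable (fun ω => softmaxJacobian k (u ω) ℓ j) μ :=
  .of_bound ((continuous_softmaxJacobian_apply ℓ j).measurable.comp hu).aestronglyMeasurable 1
    (.of_forall fun ω => abs_softmaxJacobian_le_one (u ω) ℓ j)

theorem integral_softmaxJacobian_apply {Ω : Type*} [MeasurableSpace Ω] (μ : Measure Ω)
    [IsFiniteMeasure μ] {u : Ω → Fin k → ℝ} (hu : Measurable u) (ℓ j : Fin k) :
    ∫ ω, softmaxJacobian k (u ω) ℓ j ∂μ =
      diagonal (fun m => ∫ ω, softmax k (u ω) m ∂μ) ℓ j -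
        ∫ ω, softmax k (u ω) ℓ * softmax k (u ω) j ∂μ := by
  have hs : ∀ m, Integrable (fun ω => softmax k (u ω) m) μ := fun m =>
    .of_bound ((continuous_softmax m).measurable.comp hu).aestronglyMeasurable 1
      (.of_forall fun ω => abs_softmax_le_one (u ω) m)
  have hss : Integrable (fun ω => softmax k (u ω) ℓ * softmax k (u ω) j) μ :=
    (hs j).bdd_mul (hs ℓ).1 (.of_forall fun ω => abs_softmax_le_one (u ω) ℓ)
  simp only [softmaxJacobian, Matrix.sub_apply, vecMulVec_apply]
  by_cases h : ℓ = j
  · subst h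
    simp only [diagonal_apply_eq]
    exact integral_sub (hs ℓ) hss
  · simp only [diagonal_apply_ne _ h, zero_sub, integral_neg]

theorem integral_softmaxJacobian_mul_apply {Ω : Type*} [MeasurableSpace Ω] (μ : Measure Ω)
    [IsFiniteMeasure μ] {u : Ω → Fin k → ℝ} (hu : Measurable u) {n : Type*}
    (M : Matrix (Fin k) n ℝ) (ℓ : Fin k) (i : n) :
    ∫ ω, (softmaxJacobian k (u ω) * M) ℓ i ∂μ =
      ((diagonal (fun m => ∫ ω, softmax k (u ω) m ∂μ) -
        of fun ℓ j => ∫ ω, softmax k (u ω) ℓ * softmax k (u ω) j ∂μ) * M) ℓ i := by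
  simp only [mul_apply]
  rw [integral_finsetSum _ fun j _ => (integrable_softmaxJacobian_apply μ hu ℓ j).mul_const _]
  simp only [integral_mul_const, integral_softmaxJacobian_apply μ hu, Matrix.sub_apply,
    of_apply]

lemma abs_softmaxJacobian_mul_apply_le {n : Type*} (x : Fin k → ℝ) (M : Matrix (Fin k) n ℝ)
    (ℓ : Fin k) (i : n) : |(softmaxJacobian k x * M) ℓ i| ≤ ∑ j, |M j i| := by
  rw [mul_apply]
  refine (Finset.abs_sum_le_sum_abs _ _).trans (Finset.sum_le_sum fun j _ => ?_)
  rw [abs_mul]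
  exact mul_le_of_le_one_left (abs_nonneg _) (abs_softmaxJacobian_le_one x ℓ j)

lemma hasFDerivAt_softmax_mulVec {n : Type*} [Fintype n] (M : Matrix (Fin k) n ℝ) (x : n → ℝ)
    (ℓ : Fin k) :
    HasFDerivAt (fun y => softmax k (M *ᵥ y) ℓ)
      (∑ i, (softmaxJacobian k (M *ᵥ x) * M) ℓ i •
        ContinuousLinearMap.proj (R := ℝ) (φ := fun _ : n => ℝ) i) x := by
  refine ((hasFDerivAt_softmax (M *ᵥ x) ℓ).comp x
    (mulVecLin M).toContinuousLinearMap.hasFDerivAt).congr_fderiv ?_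
  ext y
  simp only [ContinuousLinearMap.comp_apply, _root_.sum_apply,
    _root_.smul_apply, ContinuousLinearMap.proj_apply, smul_eq_mul,
    LinearMap.coe_toContinuousLinearMap', mulVecLin_apply, mulVec, dotProduct, mul_apply,
    Finset.mul_sum, Finset.sum_mul]
  rw [Finset.sum_comm]
  simp only [mul_assoc]

lemma fderiv_softmax_mulVec_single {n : Type*} [Fintype n] [DecidableEq n]
    (M : Matrix (Fin k) n ℝ) (x : n → ℝ) (ℓ : Fin k) (i : n) :
    fderiv ℝ (fun y => softmax k (M *ᵥ y) ℓ) x (Pi.single i 1) =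
      (softmaxJacobian k (M *ᵥ x) * M) ℓ i := by
  simp [(hasFDerivAt_softmax_mulVec M x ℓ).fderiv, Pi.single_apply]

end Softmax

theorem softmax_gaussian_correlation_general
    (k r : ℕ)
    (V : Matrix (Fin k) (Fin r) ℝ) (S : Matrix (Fin r) (Fin r) ℝ)
    (π : Fin k → ℝ) (Pim : Matrix (Fin k) (Fin k) ℝ)
    (hπ : ∀ ℓ, π ℓ =
      ∫ x, softmax k ((V * S).mulVec x) ℓ ∂(Measure.pi fun _ : Fin r => gaussianReal 0 1))
    (hPi : ∀ ℓ j, Pim ℓ j =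
      ∫ x, softmax k ((V * S).mulVec x) ℓ * softmax k ((V * S).mulVec x) j
        ∂(Measure.pi fun _ : Fin r => gaussianReal 0 1)) :
    ∀ (ℓ : Fin k) (i : Fin r),
      (∫ x, softmax k ((V * S).mulVec x) ℓ * x i
          ∂(Measure.pi fun _ : Fin r => gaussianReal 0 1)) =
        ((Matrix.diagonal π - Pim) * (V * S)) ℓ i := by
  intro ℓ i
  rw [integral_mul_eval_pi_gaussianReal_eq_integral_fderiv i
    (fun x => (hasFDerivAt_softmax_mulVec (V * S) x ℓ).differentiableAt)
    (fun x => abs_softmax_le_one _ ℓ)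
    (fun x => (fderiv_softmax_mulVec_single (V * S) x ℓ i).symm ▸
      abs_softmaxJacobian_mul_apply_le _ (V * S) ℓ i)]
  simp only [fderiv_softmax_mulVec_single]
  rw [integral_softmaxJacobian_mul_apply _ (by fun_prop)]
  simp only [← hπ, ← hPi]
  rfl

/-- Let `V ∈ ℝ^{k×r}`, `Σ ∈ ℝ^{r×r}` and `g ~ N(0, I_r)`.
Let `v = softmax (V Σ g)`, `π = E[v]` and `Π = E[v vᵀ]`.
Then `E[v gᵀ] = (diag π − Π) V Σ`, entrywise:
`E[v_ℓ g_i] = ((diag π − Π) V Σ)_{ℓ i}`. -/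
theorem softmax_gaussian_correlation
    (k r : ℕ) (hk : 0 < k)
    (V : Matrix (Fin k) (Fin r) ℝ) (S : Matrix (Fin r) (Fin r) ℝ)
    (π : Fin k → ℝ) (Pim : Matrix (Fin k) (Fin k) ℝ)
    (hπ : ∀ ℓ, π ℓ =
      ∫ x, softmax k ((V * S).mulVec x) ℓ ∂(Measure.pi fun _ : Fin r => gaussianReal 0 1))
    (hPi : ∀ ℓ j, Pim ℓ j =
      ∫ x, softmax k ((V * S).mulVec x) ℓ * softmax k ((V * S).mulVec x) j
        ∂(Measure.pi fun _ : Fin r => gaussianReal 0 1)) :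
    ∀ (ℓ : Fin k) (i : Fin r),
      (∫ x, softmax k ((V * S).mulVec x) ℓ * x i
          ∂(Measure.pi fun _ : Fin r => gaussianReal 0 1)) =
        ((Matrix.diagonal π - Pim) * (V * S)) ℓ i :=
  softmax_gaussian_correlation_general k r V S π Pim hπ hPi
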